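/- For every λ ∈ ℂ and every x ∈ (a,b), w_{λ,m}(x) → w_λ(x) as m → ∞ (the convergence being pointwise, for m large enough that a_m < x). -/

import Mathlib

/-!
By Fubini, the integral equation `w x = 1 - λ ∫_a^x (1/p y) ∫_a^y r ξ w ξ dξ dy` is the Volterra
equation `w x = 1 - λ ∫_a^x K x ξ * w ξ dξ` with kernel `K x ξ = r ξ ∫_ξ^x 1/p` (`volterraKernel`),
and the left-boundary condition says precisely that `K x` is integrable near `a`. The same holds
for `w_{λ,m}` on `(a_m, x)`. Subtracting the two equations, `e = |w_{λ,m} - w_λ|` satisfies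
`e t ≤ E_m + |λ| ∫_{a_m}^t K x ξ * e ξ dξ` on `[a_m, x]`, where `E_m = |λ| M ∫_a^{a_m} K x` and
`M` bounds `w_λ` near `a`. Grönwall's inequality gives `e x ≤ E_m exp (|λ| ∫_a^x K x)`, and
`E_m → 0` because `K x` is integrable near `a`.
-/

open MeasureTheory Filter Topology
open scoped ENNReal

/-- Local absolute continuity on a set, expressed via the fundamental theorem of calculus. -/
def LocAC (f : ℝ → ℝ) (I : Set ℝ) : Prop :=
  ∀ x ∈ I, ∀ y ∈ I, IntervalIntegrable (deriv f) MeasureTheory.volume x y ∧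
    f y - f x = ∫ t in x..y, deriv f t

open Set Real

theorem continuousOn_primitive_of_isOpen {E : Type*} [NormedAddCommGroup E] [NormedSpace ℝ E]
    {g : ℝ → E} {I : Set ℝ} (hIo : IsOpen I)
    (hg : ∀ u ∈ I, ∀ v ∈ I, IntervalIntegrable g volume u v) {x₀ : ℝ} (hx₀ : x₀ ∈ I) :
    ContinuousOn (fun x => ∫ y in x₀..x, g y) I := by
  intro x hx
  obtain ⟨u, v, hxuv, huv_nhds, huv⟩ := exists_Icc_mem_subset_of_mem_nhds (hIo.mem_nhds hx)
  have hu : u ∈ I := huv (left_mem_Icc.2 (hxuv.1.trans hxuv.2))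
  have hcont : ContinuousOn (fun y => (∫ t in x₀..u, g t) + ∫ t in u..y, g t) (Icc u v) := by
    refine continuousOn_const.add ?_
    simpa [uIcc_of_le (hxuv.1.trans hxuv.2)] using
      intervalIntegral.continuousOn_primitive_interval' (hg u hu v (huv (right_mem_Icc.2
        (hxuv.1.trans hxuv.2)))) left_mem_uIcc
  refine ((hcont.congr fun y hy => ?_).continuousAt huv_nhds).continuousWithinAt
  exact (intervalIntegral.integral_add_adjacent_intervals (hg x₀ hx₀ u hu)
    (hg u hu y (huv hy))).symm

theorem LocAC.continuousOn {f : ℝ → ℝ} {I : Set ℝ} (hIo : IsOpen I) (hf : LocAC f I) :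
    ContinuousOn f I := fun x hx =>
  ((continuousOn_primitive_of_isOpen hIo (fun u hu v hv => (hf u hu v hv).1) hx).const_add
    (f x) |>.congr (fun y hy => by simp [← (hf x hx y hy).2])) x hx

theorem le_mul_exp_integral_of_le_add_integral {K e : ℝ → ℝ} {α β E : ℝ} (hαβ : α ≤ β)
    (hK : ContinuousOn K (Icc α β)) (hK0 : ∀ s ∈ Icc α β, 0 ≤ K s)
    (he : ContinuousOn e (Icc α β))
    (h : ∀ t ∈ Icc α β, e t ≤ E + ∫ s in α..t, K s * e s) :
    e β ≤ E * exp (∫ s in α..β, K s) := by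
  have hprim : ∀ g : ℝ → ℝ, ContinuousOn g (Icc α β) →
      ContinuousOn (fun t => ∫ s in α..t, g s) (Icc α β) := fun g hg => by
    rw [← uIcc_of_le hαβ] at hg ⊢
    exact intervalIntegral.continuousOn_primitive_interval hg.integrableOn_uIcc
  have hderiv : ∀ g : ℝ → ℝ, ContinuousOn g (Icc α β) → ∀ t ∈ Ioo α β,
      HasDerivAt (fun t => ∫ s in α..t, g s) (g t) t := fun g hg t ht =>
    intervalIntegral.integral_hasDerivAt_right
      ((hg.mono (Icc_subset_Icc_right ht.2.le)).intervalIntegrable_of_Icc ht.1.le)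
      ((hg.mono Ioo_subset_Icc_self).stronglyMeasurableAtFilter isOpen_Ioo t ht)
      (hg.continuousAt (Icc_mem_nhds ht.1 ht.2))
  have hKe : ContinuousOn (fun s => K s * e s) (Icc α β) := hK.mul he
  set U := fun t => E + ∫ s in α..t, K s * e s
  set Φ := fun t => ∫ s in α..t, K s
  have hV : AntitoneOn (fun t => U t * exp (-Φ t)) (Icc α β) := by
    refine antitoneOn_of_hasDerivWithinAt_nonpos (convex_Icc α β)
      (((hprim _ hKe).const_add E).mul (hprim K hK).neg.rexp)
      (f' := fun t => K t * (e t - U t) * exp (-Φ t)) (fun t ht => ?_) fun t ht => ?_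
      <;> rw [interior_Icc] at ht
    · exact ((((hderiv _ hKe t ht).const_add E).mul (hderiv K hK t ht).neg.exp).congr_deriv
        (by simp only [U, Φ, Pi.neg_apply]; ring)).hasDerivWithinAt
    · exact mul_nonpos_of_nonpos_of_nonneg (mul_nonpos_of_nonneg_of_nonpos
        (hK0 t (Ioo_subset_Icc_self ht)) (sub_nonpos.2 (h t (Ioo_subset_Icc_self ht))))
        (exp_pos _).le
  have hVβ := hV (left_mem_Icc.2 hαβ) (right_mem_Icc.2 hαβ) hαβ
  simp only [U, Φ, intervalIntegral.integral_same, add_zero, neg_zero, exp_zero, mul_one] at hVβ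
  calc e β ≤ U β := h β (right_mem_Icc.2 hαβ)
    _ = U β * exp (-Φ β) * exp (Φ β) := by
        rw [mul_assoc, ← exp_add, neg_add_cancel, exp_zero, mul_one]
    _ ≤ E * exp (Φ β) := by gcongr

theorem setIntegral_mul_setIntegral_Iio_swap {𝕜 : Type*} [RCLike 𝕜] {μ : Measure ℝ} [SFinite μ]
    {U : Set ℝ} {f q : ℝ → 𝕜}
    (hf : AEStronglyMeasurable f (μ.restrict U)) (hq : AEStronglyMeasurable q (μ.restrict U))
    (hfin : ∫⁻ ξ in U, ‖f ξ‖ₑ * ∫⁻ y in U ∩ Ioi ξ, ‖q y‖ₑ ∂μ ∂μ ≠ ∞) :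
    ∫ y in U, q y * ∫ ξ in U ∩ Iio y, f ξ ∂μ ∂μ = ∫ ξ in U, f ξ * ∫ y in U ∩ Ioi ξ, q y ∂μ ∂μ := by
  set F : ℝ → ℝ → 𝕜 := fun y ξ => {z : ℝ × ℝ | z.2 < z.1}.indicator (fun z => q z.1 * f z.2) (y, ξ)
  have hFm : AEStronglyMeasurable (Function.uncurry F) ((μ.restrict U).prod (μ.restrict U)) :=
    (hq.comp_fst.mul hf.comp_snd).indicator (measurableSet_lt measurable_snd measurable_fst)
  have hFy : ∀ y, ∫ ξ in U, F y ξ ∂μ = q y * ∫ ξ in U ∩ Iio y, f ξ ∂μ := fun y => by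
    rw [inter_comm, ← Measure.restrict_restrict measurableSet_Iio,
      ← integral_indicator measurableSet_Iio, ← integral_const_mul]
    congr 1 with ξ
    by_cases h : ξ < y <;> simp [F, h]
  have hFξ : ∀ ξ, ∫ y in U, F y ξ ∂μ = f ξ * ∫ y in U ∩ Ioi ξ, q y ∂μ := fun ξ => by
    rw [inter_comm, ← Measure.restrict_restrict measurableSet_Ioi,
      ← integral_indicator measurableSet_Ioi, ← integral_const_mul]
    congr 1 with y
    by_cases h : ξ < y <;> simp [F, h, mul_comm]
  have hFξ' : ∀ ξ, ∫⁻ y in U, ‖F y ξ‖ₑ ∂μ = ‖f ξ‖ₑ * ∫⁻ y in U ∩ Ioi ξ, ‖q y‖ₑ ∂μ := fun ξ => by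
    rw [inter_comm, ← Measure.restrict_restrict measurableSet_Ioi,
      ← lintegral_indicator measurableSet_Ioi,
      ← lintegral_const_mul'' _ (hq.enorm.indicator measurableSet_Ioi)]
    congr 1 with y
    by_cases h : ξ < y <;> simp [F, h, mul_comm]
  have hFi : Integrable (Function.uncurry F) ((μ.restrict U).prod (μ.restrict U)) := by
    refine ⟨hFm, ?_⟩
    rw [HasFiniteIntegral, lintegral_prod_symm _ hFm.enorm]
    simpa [hFξ'] using hfin.lt_top
  simp only [← hFy, ← hFξ]
  exact integral_integral_swap hFi

theorem setIntegral_inter_Iio_eq_add {E : Type*} [NormedAddCommGroup E] [NormedSpace ℝ E]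
    {I : Set ℝ} (hIc : I.OrdConnected) {f : ℝ → E} {α t : ℝ} (hα : α ∈ I) (ht : t ∈ I)
    (hαt : α ≤ t) (hf : IntegrableOn f (I ∩ Iio t)) :
    ∫ ξ in I ∩ Iio t, f ξ = (∫ ξ in I ∩ Iio α, f ξ) + ∫ ξ in Ioo α t, f ξ := by
  have hIco : I ∩ Ico α t = Ico α t := inter_eq_right.2 fun ξ hξ => hIc.out hα ht ⟨hξ.1, hξ.2.le⟩
  have hsplit : I ∩ Iio t = (I ∩ Iio α) ∪ Ico α t := by
    rw [← Iio_union_Ico_eq_Iio hαt, inter_union_distrib_left, hIco]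
  rw [hsplit, setIntegral_union (disjoint_left.2 fun ξ h₁ h₂ => h₂.1.not_gt h₁.2)
    measurableSet_Ico (hf.mono_set (hsplit ▸ subset_union_left))
    (hf.mono_set (hsplit ▸ subset_union_right)), integral_Ico_eq_integral_Ioo]

theorem integrableOn_inter_Iio_of_continuousOn {E : Type*} [NormedAddCommGroup E]
    {I : Set ℝ} {f : ℝ → E} (hIc : I.OrdConnected)
    (hf : ContinuousOn f I) {z x : ℝ} (hz : z ∈ I) (hx : x ∈ I)
    (hfz : IntegrableOn f (I ∩ Iio z)) : IntegrableOn f (I ∩ Iio x) := by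
  refine (hfz.union ((hf.mono (hIc.out hz hx)).integrableOn_Icc)).mono_set fun ξ hξ => ?_
  rcases lt_or_ge ξ z with h | h
  exacts [Or.inl ⟨hξ.1, h⟩, Or.inr ⟨h, hξ.2.le⟩]

theorem tendsto_setIntegral_inter_Iio_zero {E : Type*} [NormedAddCommGroup E]
    [NormedSpace ℝ E] {I : Set ℝ} (hI : MeasurableSet I) {f : ℝ → E} {A : ℕ → ℝ}
    (hA : Antitone A) (hAI : ∀ z ∈ I, ∃ m, A m < z) (hf : ∃ m, IntegrableOn f (I ∩ Iio (A m))) :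
    Tendsto (fun m => ∫ ξ in I ∩ Iio (A m), f ξ) atTop (𝓝 0) := by
  have hempty : ⋂ m, I ∩ Iio (A m) = ∅ := eq_empty_iff_forall_notMem.2 fun ξ hξ => by
    obtain ⟨m, hm⟩ := hAI ξ (mem_iInter.1 hξ 0).1
    exact (mem_iInter.1 hξ m).2.not_gt hm
  simpa [hempty] using tendsto_setIntegral_of_antitone (fun m => hI.inter measurableSet_Iio)
    (fun i j hij => inter_subset_inter_right _ (Iio_subset_Iio (hA hij))) hf

theorem exists_norm_le_of_eq_one_sub_integral {I : Set ℝ} (hIc : I.OrdConnected)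
    {w F : ℝ → ℂ} {lam : ℂ} (hw : ContinuousOn w I)
    (heq : ∀ x ∈ I, w x = 1 - lam * ∫ y in I ∩ Iio x, F y) {x₀ : ℝ} (hx₀ : x₀ ∈ I) :
    ∃ M, ∀ ξ ∈ I ∩ Iic x₀, ‖w ξ‖ ≤ M := by
  by_cases hF : ∃ t ∈ I, IntegrableOn F (I ∩ Iio t)
  · obtain ⟨t, ht, hFt⟩ := hF
    obtain ⟨M, hM⟩ := isCompact_Icc.exists_bound_of_continuousOn (hw.mono (hIc.out ht hx₀))
    refine ⟨max (1 + ‖lam‖ * ∫ y in I ∩ Iio t, ‖F y‖) M, fun ξ hξ => ?_⟩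
    rcases le_or_gt ξ t with hξt | hξt
    · refine le_max_of_le_left ?_
      rw [heq ξ hξ.1]
      refine (norm_sub_le _ _).trans ?_
      rw [norm_one, norm_mul]
      gcongr
      exact (norm_integral_le_integral_norm _).trans (setIntegral_mono_set hFt.norm
        (ae_of_all _ fun _ => norm_nonneg _)
        (inter_subset_inter_right _ (Iio_subset_Iio hξt)).eventuallyLE)
    · exact le_max_of_le_right (hM ξ ⟨hξt.le, hξ.2⟩)
  · -- otherwise every integral in `heq` is the junk value `0`, so `w = 1` on `I`
    push Not at hF
    exact ⟨1, fun ξ hξ => by simp [heq ξ hξ.1, integral_undef (hF ξ hξ.1)]⟩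

noncomputable def volterraKernel (p r : ℝ → ℝ) (x ξ : ℝ) : ℝ := r ξ * ∫ y in ξ..x, (p y)⁻¹

section VolterraKernel

variable {I : Set ℝ} {p r : ℝ → ℝ}

theorem intervalIntegrable_inv (hIc : I.OrdConnected) (hp : ∀ x ∈ I, 0 < p x)
    (hpc : ContinuousOn p I) {u v : ℝ} (hu : u ∈ I) (hv : v ∈ I) :
    IntervalIntegrable (fun y => (p y)⁻¹) volume u v :=
  ((hpc.inv₀ fun y hy => (hp y hy).ne').mono (hIc.uIcc_subset hu hv)).intervalIntegrable

theorem continuousOn_volterraKernel (hIo : IsOpen I) (hIc : I.OrdConnected)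
    (hp : ∀ x ∈ I, 0 < p x) (hpc : ContinuousOn p I) (hrc : ContinuousOn r I) {x : ℝ}
    (hx : x ∈ I) : ContinuousOn (volterraKernel p r x) I := by
  refine hrc.mul ((continuousOn_primitive_of_isOpen hIo
    (fun u hu v hv => intervalIntegrable_inv hIc hp hpc hu hv) hx).neg.congr fun ξ _ => ?_)
  simp [intervalIntegral.integral_symm ξ x]

theorem integral_inv_nonneg (hIc : I.OrdConnected) (hp : ∀ x ∈ I, 0 < p x) {ξ x : ℝ}
    (hξ : ξ ∈ I) (hx : x ∈ I) (hξx : ξ ≤ x) : 0 ≤ ∫ y in ξ..x, (p y)⁻¹ :=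
  intervalIntegral.integral_nonneg hξx fun y hy => (inv_pos.2 (hp y (hIc.out hξ hx hy))).le

theorem volterraKernel_nonneg (hIc : I.OrdConnected) (hp : ∀ x ∈ I, 0 < p x)
    (hr : ∀ x ∈ I, 0 ≤ r x) {x ξ : ℝ} (hx : x ∈ I) (hξ : ξ ∈ I) (hξx : ξ ≤ x) :
    0 ≤ volterraKernel p r x ξ :=
  mul_nonneg (hr ξ hξ) (integral_inv_nonneg hIc hp hξ hx hξx)

theorem volterraKernel_eq_add (hIc : I.OrdConnected) (hp : ∀ x ∈ I, 0 < p x)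
    (hpc : ContinuousOn p I) {c x ξ : ℝ} (hc : c ∈ I) (hx : x ∈ I) (hξ : ξ ∈ I) :
    volterraKernel p r x ξ = volterraKernel p r c ξ + (∫ y in c..x, (p y)⁻¹) * r ξ := by
  rw [volterraKernel, volterraKernel, ← intervalIntegral.integral_add_adjacent_intervals
    (intervalIntegrable_inv hIc hp hpc hξ hc) (intervalIntegrable_inv hIc hp hpc hc hx)]
  ring

theorem volterraKernel_mono (hIc : I.OrdConnected) (hp : ∀ x ∈ I, 0 < p x)
    (hr : ∀ x ∈ I, 0 ≤ r x) (hpc : ContinuousOn p I) {t x ξ : ℝ} (ht : t ∈ I) (hx : x ∈ I)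
    (hξ : ξ ∈ I) (htx : t ≤ x) : volterraKernel p r t ξ ≤ volterraKernel p r x ξ := by
  rw [volterraKernel_eq_add hIc hp hpc ht hx hξ, le_add_iff_nonneg_right]
  exact mul_nonneg (integral_inv_nonneg hIc hp ht hx htx) (hr ξ hξ)

theorem setLIntegral_Ioo_inv_eq (hIc : I.OrdConnected) (hp : ∀ x ∈ I, 0 < p x)
    (hpc : ContinuousOn p I) {ξ x : ℝ} (hξ : ξ ∈ I) (hx : x ∈ I) (hξx : ξ ≤ x) :
    ∫⁻ y in Ioo ξ x, ENNReal.ofReal (p y)⁻¹ = ENNReal.ofReal (∫ y in ξ..x, (p y)⁻¹) := by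
  rw [intervalIntegral.integral_of_le hξx, integral_Ioc_eq_integral_Ioo,
    ofReal_integral_eq_lintegral_ofReal
      ((intervalIntegrable_inv hIc hp hpc hξ hx).1.mono_set Ioo_subset_Ioc_self)]
  exact ae_restrict_of_forall_mem measurableSet_Ioo fun y hy =>
    (inv_pos.2 (hp y (hIc.out hξ hx (Ioo_subset_Icc_self hy)))).le

theorem setIntegral_Ioo_inv_eq {ξ x : ℝ} (hξx : ξ ≤ x) :
    ∫ y in Ioo ξ x, ((p y : ℂ))⁻¹ = ((∫ y in ξ..x, (p y)⁻¹ : ℝ) : ℂ) := by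
  rw [intervalIntegral.integral_of_le hξx, integral_Ioc_eq_integral_Ioo, ← integral_complex_ofReal]
  push_cast
  rfl

theorem integrableOn_volterraKernel_of_lintegral_lt_top (hIo : IsOpen I) (hIc : I.OrdConnected)
    (hp : ∀ x ∈ I, 0 < p x) (hr : ∀ x ∈ I, 0 ≤ r x) (hpc : ContinuousOn p I)
    (hrc : ContinuousOn r I) {c : ℝ} (hc : c ∈ I)
    (hleft : ∫⁻ y in I ∩ Iio c,
        (∫⁻ x in Ioo y c, ENNReal.ofReal (p x)⁻¹) * ENNReal.ofReal (r y) < ⊤) :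
    IntegrableOn (volterraKernel p r c) (I ∩ Iio c) := by
  have hS : MeasurableSet (I ∩ Iio c) := hIo.measurableSet.inter measurableSet_Iio
  refine ⟨((continuousOn_volterraKernel hIo hIc hp hpc hrc hc).mono inter_subset_left
    ).aestronglyMeasurable hS, ?_⟩
  rw [hasFiniteIntegral_iff_ofReal (ae_restrict_of_forall_mem hS fun ξ hξ =>
    volterraKernel_nonneg hIc hp hr hc hξ.1 hξ.2.le)]
  refine lt_of_eq_of_lt (setLIntegral_congr_fun hS fun ξ hξ => ?_) hleft
  rw [setLIntegral_Ioo_inv_eq hIc hp hpc hξ.1 hc hξ.2.le, volterraKernel,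
    ENNReal.ofReal_mul (hr ξ hξ.1), mul_comm]

theorem integrableOn_volterraKernel (hIo : IsOpen I) (hIc : I.OrdConnected)
    (hp : ∀ x ∈ I, 0 < p x) (hr : ∀ x ∈ I, 0 ≤ r x) (hpc : ContinuousOn p I)
    (hrc : ContinuousOn r I) {c x : ℝ} (hc : c ∈ I) (hx : x ∈ I)
    (hκc : IntegrableOn (volterraKernel p r c) (I ∩ Iio c)) :
    IntegrableOn (volterraKernel p r x) (I ∩ Iio x) := by
  obtain ⟨z, hzc, hz⟩ := (hIo.eventually_mem hc).exists_lt
  have hIz : MeasurableSet (I ∩ Iio z) := hIo.measurableSet.inter measurableSet_Iio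
  have hzc' : I ∩ Iio z ⊆ I ∩ Iio c := inter_subset_inter_right _ (Iio_subset_Iio hzc.le)
  have hD : 0 < ∫ y in z..c, (p y)⁻¹ :=
    intervalIntegral.intervalIntegral_pos_of_pos_on (intervalIntegrable_inv hIc hp hpc hz hc)
      (fun y hy => inv_pos.2 (hp y (hIc.out hz hc (Ioo_subset_Icc_self hy)))) hzc
  -- on `I ∩ Iio z`, `∫_ξ^c 1/p ≥ ∫_z^c 1/p > 0`, so `r` is dominated by the kernel at `c`
  have hrz : IntegrableOn r (I ∩ Iio z) := by
    refine Integrable.mono' ((hκc.mono_set hzc').div_const (∫ y in z..c, (p y)⁻¹))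
      ((hrc.mono inter_subset_left).aestronglyMeasurable hIz)
      (ae_restrict_of_forall_mem hIz fun ξ hξ => ?_)
    rw [Real.norm_of_nonneg (hr ξ hξ.1), le_div_iff₀ hD, volterraKernel]
    refine mul_le_mul_of_nonneg_left (intervalIntegral.integral_mono_interval hξ.2.le hzc.le
      le_rfl (ae_restrict_of_forall_mem measurableSet_Ioc fun y hy => ?_)
      (intervalIntegrable_inv hIc hp hpc hξ.1 hc)) (hr ξ hξ.1)
    exact (inv_pos.2 (hp y (hIc.out hξ.1 hc (Ioc_subset_Icc_self hy)))).le
  refine integrableOn_inter_Iio_of_continuousOn hIc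
    (continuousOn_volterraKernel hIo hIc hp hpc hrc hx) hz hx ?_
  exact ((hκc.mono_set hzc').add (hrz.const_mul _)).congr_fun
    (fun ξ hξ => (volterraKernel_eq_add hIc hp hpc hc hx hξ.1).symm) hIz

theorem setIntegral_inv_mul_setIntegral_eq_volterraKernel (hIc : I.OrdConnected)
    (hp : ∀ x ∈ I, 0 < p x) (hpc : ContinuousOn p I) (hrc : ContinuousOn r I) {t : ℝ}
    (ht : t ∈ I) {U : Set ℝ} (hU : MeasurableSet U) (hUt : U ⊆ I ∩ Iio t)
    (hU_Ioo : ∀ ξ ∈ U, Ioo ξ t ⊆ U) {w : ℝ → ℂ} (hw : AEStronglyMeasurable w (volume.restrict U))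
    (hκw : Integrable (fun ξ => volterraKernel p r t ξ * ‖w ξ‖) (volume.restrict U)) :
    ∫ y in U, ((p y : ℂ))⁻¹ * ∫ ξ in U ∩ Iio y, w ξ * r ξ
      = ∫ ξ in U, (volterraKernel p r t ξ : ℂ) * w ξ := by
  have hUIoi : ∀ ξ ∈ U, U ∩ Ioi ξ = Ioo ξ t := fun ξ hξ =>
    Subset.antisymm (fun y hy => ⟨hy.2, (hUt hy.1).2⟩) fun y hy => ⟨hU_Ioo ξ hξ hy, hy.1⟩
  have hpU : ContinuousOn (fun y => ((p y : ℂ))⁻¹) U :=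
    ((Complex.continuous_ofReal.comp_continuousOn hpc).inv₀ fun y hy =>
      Complex.ofReal_ne_zero.2 (hp y hy).ne').mono fun y hy => (hUt hy).1
  have hrU : AEStronglyMeasurable (fun ξ => (r ξ : ℂ)) (volume.restrict U) :=
    ((Complex.continuous_ofReal.comp_continuousOn hrc).mono fun y hy => (hUt hy).1
      ).aestronglyMeasurable hU
  rw [setIntegral_mul_setIntegral_Iio_swap (f := fun ξ => w ξ * r ξ) (hw.mul hrU)
    (hpU.aestronglyMeasurable hU)]
  · refine setIntegral_congr_fun hU fun ξ hξ => ?_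
    rw [hUIoi ξ hξ, setIntegral_Ioo_inv_eq (hUt hξ).2.le, volterraKernel]
    push_cast
    ring
  · refine ne_of_eq_of_ne (setLIntegral_congr_fun hU fun ξ hξ => ?_) hκw.2.ne
    have hP : ∫⁻ y in Ioo ξ t, ‖((p y : ℂ))⁻¹‖ₑ = ‖∫ y in ξ..t, (p y)⁻¹‖ₑ := by
      rw [Real.enorm_of_nonneg (integral_inv_nonneg hIc hp (hUt hξ).1 ht (hUt hξ).2.le),
        ← setLIntegral_Ioo_inv_eq hIc hp hpc (hUt hξ).1 ht (hUt hξ).2.le]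
      refine setLIntegral_congr_fun measurableSet_Ioo fun y hy => ?_
      rw [← ofReal_norm, norm_inv, Complex.norm_real,
        Real.norm_of_nonneg (hp y (hIc.out (hUt hξ).1 ht (Ioo_subset_Icc_self hy))).le]
    rw [hUIoi ξ hξ, hP]
    simp only [volterraKernel, enorm_mul, enorm_norm]
    rw [← ofReal_norm (r ξ : ℂ), Complex.norm_real, ofReal_norm]
    ring

theorem setIntegral_inter_Iio_eq_volterraKernel (hIc : I.OrdConnected) (hp : ∀ x ∈ I, 0 < p x)
    (hpc : ContinuousOn p I) (hrc : ContinuousOn r I) {t : ℝ} (ht : t ∈ I)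
    (hκ : IntegrableOn (volterraKernel p r t) (I ∩ Iio t)) {w : ℝ → ℂ} {M : ℝ}
    (hw : ContinuousOn w I) (hwM : ∀ ξ ∈ I ∩ Iio t, ‖w ξ‖ ≤ M) :
    ∫ y in I ∩ Iio t, ((p y : ℂ))⁻¹ * ∫ ξ in I ∩ Iio y, w ξ * r ξ
      = ∫ ξ in I ∩ Iio t, (volterraKernel p r t ξ : ℂ) * w ξ := by
  have hU : MeasurableSet (I ∩ Iio t) := hIc.measurableSet.inter measurableSet_Iio
  have hwU : AEStronglyMeasurable w (volume.restrict (I ∩ Iio t)) :=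
    (hw.mono inter_subset_left).aestronglyMeasurable hU
  rw [← setIntegral_inv_mul_setIntegral_eq_volterraKernel hIc hp hpc hrc ht hU subset_rfl
    (fun ξ hξ y hy => ⟨hIc.out hξ.1 ht ⟨hy.1.le, hy.2.le⟩, hy.2⟩) hwU
    (hκ.mul_bdd hwU.norm (ae_restrict_of_forall_mem hU fun ξ hξ => by simpa using hwM ξ hξ))]
  refine setIntegral_congr_fun hU fun y hy => ?_
  rw [inter_assoc, Iio_inter_Iio, min_eq_right hy.2.le]

theorem setIntegral_Ioo_eq_volterraKernel (hIo : IsOpen I) (hIc : I.OrdConnected)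
    (hp : ∀ x ∈ I, 0 < p x) (hpc : ContinuousOn p I) (hrc : ContinuousOn r I) {α t : ℝ}
    (hα : α ∈ I) (ht : t ∈ I) {w : ℝ → ℂ} (hw : ContinuousOn w (Icc α t)) :
    ∫ y in Ioo α t, ((p y : ℂ))⁻¹ * ∫ ξ in Ioo α y, w ξ * r ξ
      = ∫ ξ in Ioo α t, (volterraKernel p r t ξ : ℂ) * w ξ := by
  have hκw : ContinuousOn (fun ξ => volterraKernel p r t ξ * ‖w ξ‖) (Icc α t) :=
    ((continuousOn_volterraKernel hIo hIc hp hpc hrc ht).mono (hIc.out hα ht)).mul hw.norm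
  rw [← setIntegral_inv_mul_setIntegral_eq_volterraKernel hIc hp hpc hrc ht measurableSet_Ioo
    (fun ξ hξ => ⟨hIc.out hα ht (Ioo_subset_Icc_self hξ), hξ.2⟩)
    (fun ξ hξ => Ioo_subset_Ioo_left hξ.1.le)
    ((hw.mono Ioo_subset_Icc_self).aestronglyMeasurable measurableSet_Ioo)
    (hκw.integrableOn_Icc.mono_set Ioo_subset_Icc_self)]
  refine setIntegral_congr_fun measurableSet_Ioo fun y hy => ?_
  rw [Ioo_inter_Iio, min_eq_right hy.2.le]

theorem norm_setIntegral_volterraKernel_mul_le (hIc : I.OrdConnected) (hp : ∀ x ∈ I, 0 < p x)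
    (hr : ∀ x ∈ I, 0 ≤ r x) (hpc : ContinuousOn p I) {t x₀ : ℝ} (ht : t ∈ I) (hx₀ : x₀ ∈ I)
    (htx₀ : t ≤ x₀) {S : Set ℝ} (hS : MeasurableSet S) (hSt : S ⊆ I ∩ Iic t)
    {f : ℝ → ℂ} {g : ℝ → ℝ} (hg : IntegrableOn (fun ξ => volterraKernel p r x₀ ξ * g ξ) S)
    (hfg : ∀ ξ ∈ S, ‖f ξ‖ ≤ g ξ) :
    ‖∫ ξ in S, (volterraKernel p r t ξ : ℂ) * f ξ‖ ≤ ∫ ξ in S, volterraKernel p r x₀ ξ * g ξ := by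
  refine norm_integral_le_of_norm_le hg (ae_restrict_of_forall_mem hS fun ξ hξ => ?_)
  have hξ' := hSt hξ
  rw [norm_mul, Complex.norm_real,
    Real.norm_of_nonneg (volterraKernel_nonneg hIc hp hr ht hξ'.1 hξ'.2)]
  exact mul_le_mul (volterraKernel_mono hIc hp hr hpc ht hx₀ hξ'.1 htx₀) (hfg ξ hξ)
    (norm_nonneg _) (volterraKernel_nonneg hIc hp hr hx₀ hξ'.1 (hξ'.2.trans htx₀))

theorem norm_sub_le_add_integral_volterraKernel (hIo : IsOpen I) (hIc : I.OrdConnected)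
    (hp : ∀ x ∈ I, 0 < p x) (hr : ∀ x ∈ I, 0 ≤ r x) (hpc : ContinuousOn p I)
    (hrc : ContinuousOn r I) (hκ : ∀ x ∈ I, IntegrableOn (volterraKernel p r x) (I ∩ Iio x))
    {x₀ α t : ℝ} (hx₀ : x₀ ∈ I) (hα : α ∈ I) (hαt : α ≤ t) (htx₀ : t ≤ x₀)
    {u v : ℝ → ℂ} {lam : ℂ} {M : ℝ} (hu : ContinuousOn u (Icc α x₀)) (hv : ContinuousOn v I)
    (hvM : ∀ ξ ∈ I ∩ Iic x₀, ‖v ξ‖ ≤ M)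
    (hu_eq : u t = 1 - lam * ∫ ξ in Ioo α t, (volterraKernel p r t ξ : ℂ) * u ξ)
    (hv_eq : v t = 1 - lam * ∫ ξ in I ∩ Iio t, (volterraKernel p r t ξ : ℂ) * v ξ) :
    ‖u t - v t‖ ≤ ‖lam‖ * M * (∫ ξ in I ∩ Iio α, volterraKernel p r x₀ ξ)
      + ∫ ξ in α..t, ‖lam‖ * volterraKernel p r x₀ ξ * ‖u ξ - v ξ‖ := by
  have ht : t ∈ I := hIc.out hα hx₀ ⟨hαt, htx₀⟩
  have hαt_I : Icc α t ⊆ I := hIc.out hα ht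
  have hIoo : Ioo α t ⊆ I ∩ Iio t := fun ξ hξ => ⟨hαt_I (Ioo_subset_Icc_self hξ), hξ.2⟩
  have hIt : MeasurableSet (I ∩ Iio t) := hIc.measurableSet.inter measurableSet_Iio
  have hvi : IntegrableOn (fun ξ => (volterraKernel p r t ξ : ℂ) * v ξ) (I ∩ Iio t) :=
    (hκ t ht).ofReal.mul_bdd ((hv.mono inter_subset_left).aestronglyMeasurable hIt)
      (ae_restrict_of_forall_mem hIt fun ξ hξ => hvM ξ ⟨hξ.1, hξ.2.le.trans htx₀⟩)
  have hui : IntegrableOn (fun ξ => (volterraKernel p r t ξ : ℂ) * u ξ) (Ioo α t) :=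
    ((Complex.continuous_ofReal.comp_continuousOn ((continuousOn_volterraKernel hIo hIc hp hpc
      hrc ht).mono hαt_I)).mul (hu.mono (Icc_subset_Icc_right htx₀))).integrableOn_Icc.mono_set
      Ioo_subset_Icc_self
  have hdiff : u t - v t = lam * (∫ ξ in I ∩ Iio α, (volterraKernel p r t ξ : ℂ) * v ξ)
      + lam * ∫ ξ in Ioo α t, (volterraKernel p r t ξ : ℂ) * (v ξ - u ξ) := by
    simp_rw [mul_sub]
    rw [hu_eq, hv_eq, setIntegral_inter_Iio_eq_add hIc hα ht hαt hvi,
      integral_sub (hvi.mono_set hIoo) hui]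
    ring
  have hfar := norm_setIntegral_volterraKernel_mul_le hIc hp hr hpc ht hx₀ htx₀
    (hIc.measurableSet.inter measurableSet_Iio) (fun ξ hξ => ⟨hξ.1, (hξ.2.trans_le hαt).le⟩)
    (f := v) (g := fun _ => M) (((hκ x₀ hx₀).mono_set (inter_subset_inter_right _
      (Iio_subset_Iio (hαt.trans htx₀)))).mul_const M)
    fun ξ hξ => hvM ξ ⟨hξ.1, (hξ.2.trans_le (hαt.trans htx₀)).le⟩
  have hnear := norm_setIntegral_volterraKernel_mul_le hIc hp hr hpc ht hx₀ htx₀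
    measurableSet_Ioo (fun ξ hξ => ⟨(hIoo hξ).1, hξ.2.le⟩) (f := fun ξ => v ξ - u ξ)
    (g := fun ξ => ‖u ξ - v ξ‖) ((((continuousOn_volterraKernel hIo hIc hp hpc hrc hx₀).mono
      hαt_I).mul ((hu.mono (Icc_subset_Icc_right htx₀)).sub (hv.mono hαt_I)).norm
      ).integrableOn_Icc.mono_set Ioo_subset_Icc_self) fun ξ _ => (norm_sub_rev _ _).le
  calc ‖u t - v t‖
      ≤ ‖lam‖ * ‖∫ ξ in I ∩ Iio α, (volterraKernel p r t ξ : ℂ) * v ξ‖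
        + ‖lam‖ * ‖∫ ξ in Ioo α t, (volterraKernel p r t ξ : ℂ) * (v ξ - u ξ)‖ := by
        rw [hdiff, ← norm_mul, ← norm_mul]
        exact norm_add_le _ _
    _ ≤ ‖lam‖ * (∫ ξ in I ∩ Iio α, volterraKernel p r x₀ ξ * M)
        + ‖lam‖ * ∫ ξ in Ioo α t, volterraKernel p r x₀ ξ * ‖u ξ - v ξ‖ := by gcongr
    _ = _ := by
        rw [integral_mul_const, ← integral_Ioc_eq_integral_Ioo,
          ← intervalIntegral.integral_of_le hαt, ← intervalIntegral.integral_const_mul]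
        simp_rw [mul_assoc]
        ring

theorem norm_sub_le_mul_exp_volterraKernel (hIo : IsOpen I) (hIc : I.OrdConnected)
    (hp : ∀ x ∈ I, 0 < p x) (hr : ∀ x ∈ I, 0 ≤ r x) (hpc : ContinuousOn p I)
    (hrc : ContinuousOn r I) (hκ : ∀ x ∈ I, IntegrableOn (volterraKernel p r x) (I ∩ Iio x))
    {x₀ α : ℝ} (hx₀ : x₀ ∈ I) (hα : α ∈ I) (hαx₀ : α ≤ x₀)
    {u v : ℝ → ℂ} {lam : ℂ} {M : ℝ} (hu : ContinuousOn u (Icc α x₀)) (hv : ContinuousOn v I)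
    (hvM : ∀ ξ ∈ I ∩ Iic x₀, ‖v ξ‖ ≤ M)
    (hu_eq : ∀ t ∈ Icc α x₀, u t
      = 1 - lam * ∫ y in Ioo α t, ((p y : ℂ))⁻¹ * ∫ ξ in Ioo α y, u ξ * r ξ)
    (hv_eq : ∀ t ∈ I, v t
      = 1 - lam * ∫ y in I ∩ Iio t, ((p y : ℂ))⁻¹ * ∫ ξ in I ∩ Iio y, v ξ * r ξ) :
    ‖u x₀ - v x₀‖ ≤ ‖lam‖ * M * (∫ ξ in I ∩ Iio α, volterraKernel p r x₀ ξ)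
      * exp (‖lam‖ * ∫ ξ in I ∩ Iio x₀, volterraKernel p r x₀ ξ) := by
  have hIcc : Icc α x₀ ⊆ I := hIc.out hα hx₀
  have hκc := (continuousOn_volterraKernel hIo hIc hp hpc hrc hx₀).mono hIcc
  have hκ₀ : ∀ ξ ∈ I ∩ Iio x₀, 0 ≤ volterraKernel p r x₀ ξ :=
    fun ξ hξ => volterraKernel_nonneg hIc hp hr hx₀ hξ.1 hξ.2.le
  refine (le_mul_exp_integral_of_le_add_integral (K := fun ξ => ‖lam‖ * volterraKernel p r x₀ ξ)
    (e := fun ξ => ‖u ξ - v ξ‖) (E := ‖lam‖ * M * ∫ ξ in I ∩ Iio α, volterraKernel p r x₀ ξ)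
    hαx₀ (continuousOn_const.mul hκc)
    (fun ξ hξ => mul_nonneg (norm_nonneg lam) (volterraKernel_nonneg hIc hp hr hx₀ (hIcc hξ)
      hξ.2)) (hu.sub (hv.mono hIcc)).norm fun t ht => ?_).trans ?_
  · have ht' := hIcc ht
    refine norm_sub_le_add_integral_volterraKernel hIo hIc hp hr hpc hrc hκ hx₀ hα ht.1 ht.2 hu
      hv hvM ?_ ?_
    · rw [hu_eq t ht, setIntegral_Ioo_eq_volterraKernel hIo hIc hp hpc hrc hα ht'
        (hu.mono (Icc_subset_Icc_right ht.2))]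
    · rw [hv_eq t ht', setIntegral_inter_Iio_eq_volterraKernel hIc hp hpc hrc ht' (hκ t ht') hv
        fun ξ hξ => hvM ξ ⟨hξ.1, hξ.2.le.trans ht.2⟩]
  have hM : 0 ≤ M := (norm_nonneg _).trans (hvM x₀ ⟨hx₀, le_refl x₀⟩)
  gcongr
  · exact mul_nonneg (mul_nonneg (norm_nonneg lam) hM) <| setIntegral_nonneg
      (hIc.measurableSet.inter measurableSet_Iio) fun ξ hξ => hκ₀ ξ ⟨hξ.1, hξ.2.trans_le hαx₀⟩
  · rw [intervalIntegral.integral_const_mul, intervalIntegral.integral_of_le hαx₀,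
      integral_Ioc_eq_integral_Ioo]
    exact mul_le_mul_of_nonneg_left (setIntegral_mono_set (hκ x₀ hx₀)
      (ae_restrict_of_forall_mem (hIc.measurableSet.inter measurableSet_Iio) hκ₀)
      (ae_of_all _ fun ξ hξ => ⟨hIcc (Ioo_subset_Icc_self hξ), hξ.2⟩))
      (norm_nonneg lam)

end VolterraKernel

theorem stmt1_general
    (a b : EReal)
    (I : Set ℝ) (hI : I = {x : ℝ | a < (x : EReal) ∧ (x : EReal) < b})
    (p r : ℝ → ℝ)
    (hp : ∀ x ∈ I, 0 < p x) (hr : ∀ x ∈ I, 0 < r x)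
    (hpAC : LocAC p I)
    (hrAC : LocAC r I)
    (c : ℝ) (hc : c ∈ I)
    (hleft : ∫⁻ y in I ∩ Set.Iio c,
        (∫⁻ x in Set.Ioo y c, ENNReal.ofReal (p x)⁻¹) * ENNReal.ofReal (r y) < ⊤)
    -- the solution w_λ on (a,b), characterized by the integral equation
    (w : ℂ → ℝ → ℂ)
    (hw_cont : ∀ lam : ℂ, ContinuousOn (w lam) I)
    (hw_eq : ∀ lam : ℂ, ∀ x ∈ I, w lam x
        = 1 - lam * ∫ y in I ∩ Set.Iio x,
            ((p y : ℂ))⁻¹ * ∫ ξ in I ∩ Set.Iio y, w lam ξ * (r ξ : ℂ))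
    -- the strictly decreasing sequence a_m ↓ a inside (a,b)
    (aSeq : ℕ → ℝ) (haSeq_mem : ∀ m, aSeq m ∈ I) (haSeq_anti : StrictAnti aSeq)
    (haSeq_lim : Tendsto (fun m => (aSeq m : EReal)) atTop (𝓝 a))
    -- the solutions w_{λ,m} on (a_m, b), characterized by the integral equation from a_m
    (wm : ℂ → ℕ → ℝ → ℂ)
    (hwm_cont : ∀ lam : ℂ, ∀ m, ContinuousOn (wm lam m) (I ∩ Set.Ici (aSeq m)))
    (hwm_eq : ∀ lam : ℂ, ∀ m, ∀ x ∈ I, aSeq m ≤ x → wm lam m x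
        = 1 - lam * ∫ y in Set.Ioo (aSeq m) x,
            ((p y : ℂ))⁻¹ * ∫ ξ in Set.Ioo (aSeq m) y, wm lam m ξ * (r ξ : ℂ)) :
    ∀ lam : ℂ, ∀ x ∈ I,
      Tendsto (fun m => wm lam m x) atTop (𝓝 (w lam x)) := by
  intro lam x₀ hx₀
  have hIo : IsOpen I := by rw [hI]; exact isOpen_Ioo.preimage continuous_coe_real_ereal
  have hIc : I.OrdConnected := by
    rw [hI]; exact ordConnected_Ioo.preimage_mono fun _ _ => EReal.coe_le_coe
  have hpc := hpAC.continuousOn hIo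
  have hrc := hrAC.continuousOn hIo
  have hr₀ : ∀ x ∈ I, 0 ≤ r x := fun x hx => (hr x hx).le
  have hκ := fun x (hx : x ∈ I) => integrableOn_volterraKernel hIo hIc hp hr₀ hpc hrc hc hx
    (integrableOn_volterraKernel_of_lintegral_lt_top hIo hIc hp hr₀ hpc hrc hc hleft)
  have haI : ∀ z ∈ I, ∀ᶠ m in atTop, aSeq m < z := fun z hz =>
    (haSeq_lim.eventually_lt_const (hI ▸ hz).1).mono fun m hm => EReal.coe_lt_coe_iff.1 hm
  obtain ⟨M, hM⟩ := exists_norm_le_of_eq_one_sub_integral hIc (hw_cont lam) (hw_eq lam) hx₀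
  have htail : Tendsto (fun m => ∫ ξ in I ∩ Iio (aSeq m), volterraKernel p r x₀ ξ) atTop (𝓝 0) :=
    tendsto_setIntegral_inter_Iio_zero hIc.measurableSet haSeq_anti.antitone
      (fun z hz => (haI z hz).exists) ((haI x₀ hx₀).exists.imp fun m hm =>
        (hκ x₀ hx₀).mono_set (inter_subset_inter_right _ (Iio_subset_Iio hm.le)))
  rw [tendsto_iff_norm_sub_tendsto_zero]
  refine squeeze_zero' (Eventually.of_forall fun m => norm_nonneg _) ((haI x₀ hx₀).mono
    fun m hm => norm_sub_le_mul_exp_volterraKernel hIo hIc hp hr₀ hpc hrc hκ hx₀ (haSeq_mem m)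
      hm.le
      ((hwm_cont lam m).mono fun ξ hξ => ⟨hIc.out (haSeq_mem m) hx₀ hξ, hξ.1⟩) (hw_cont lam) hM
      (fun t ht => hwm_eq lam m t (hIc.out (haSeq_mem m) hx₀ ht) ht.1) (hw_eq lam)) ?_
  simpa using (htail.const_mul (‖lam‖ * M)).mul_const
    (exp (‖lam‖ * ∫ ξ in I ∩ Iio x₀, volterraKernel p r x₀ ξ))

/-- If `w_{λ,m}` is the solution of the Sturm–Liouville boundary value problem
with initial point `a_m` (i.e. `ℓ(w) = λ w` on `(a_m, b)`, `w(a_m) = 1`, `w^{[1]}(a_m) = 0`,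
formulated via the equivalent integral equation), and `a_m ↓ a`, then for every `λ ∈ ℂ` and
every `x ∈ (a,b)` one has `w_{λ,m}(x) → w_λ(x)` as `m → ∞`. -/
theorem stmt1
    (a b : EReal) (hab : a < b)
    (I : Set ℝ) (hI : I = {x : ℝ | a < (x : EReal) ∧ (x : EReal) < b})
    (p r : ℝ → ℝ)
    (hp : ∀ x ∈ I, 0 < p x) (hr : ∀ x ∈ I, 0 < r x)
    (hpAC : LocAC p I) (hp'AC : LocAC (deriv p) I)
    (hrAC : LocAC r I) (hr'AC : LocAC (deriv r) I)
    (c : ℝ) (hc : c ∈ I)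
    (hleft : ∫⁻ y in I ∩ Set.Iio c,
        (∫⁻ x in Set.Ioo y c, ENNReal.ofReal (p x)⁻¹) * ENNReal.ofReal (r y) < ⊤)
    -- the solution w_λ on (a,b), characterized by the integral equation
    (w : ℂ → ℝ → ℂ)
    (hw_cont : ∀ lam : ℂ, ContinuousOn (w lam) I)
    (hw_int : ∀ lam : ℂ, ∀ x ∈ I,
        IntegrableOn (fun ξ => w lam ξ * (r ξ : ℂ)) (I ∩ Set.Iio x))
    (hw_eq : ∀ lam : ℂ, ∀ x ∈ I, w lam x
        = 1 - lam * ∫ y in I ∩ Set.Iio x,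
            ((p y : ℂ))⁻¹ * ∫ ξ in I ∩ Set.Iio y, w lam ξ * (r ξ : ℂ))
    -- the strictly decreasing sequence a_m ↓ a inside (a,b)
    (aSeq : ℕ → ℝ) (haSeq_mem : ∀ m, aSeq m ∈ I) (haSeq_anti : StrictAnti aSeq)
    (haSeq_lim : Tendsto (fun m => (aSeq m : EReal)) atTop (𝓝 a))
    -- the solutions w_{λ,m} on (a_m, b), characterized by the integral equation from a_m
    (wm : ℂ → ℕ → ℝ → ℂ)
    (hwm_cont : ∀ lam : ℂ, ∀ m, ContinuousOn (wm lam m) (I ∩ Set.Ici (aSeq m)))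
    (hwm_eq : ∀ lam : ℂ, ∀ m, ∀ x ∈ I, aSeq m ≤ x → wm lam m x
        = 1 - lam * ∫ y in Set.Ioo (aSeq m) x,
            ((p y : ℂ))⁻¹ * ∫ ξ in Set.Ioo (aSeq m) y, wm lam m ξ * (r ξ : ℂ)) :
    ∀ lam : ℂ, ∀ x ∈ I,
      Tendsto (fun m => wm lam m x) atTop (𝓝 (w lam x)) :=
  stmt1_general a b I hI p r hp hr hpAC hrAC c hc hleft w hw_cont hw_eq aSeq haSeq_mem haSeq_anti
    haSeq_lim wm hwm_cont hwm_eq
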